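/- arXiv:2209.02424 — 2 statements merged into one kernel-verified Lean document; each statement's English description precedes it below -/
import Mathlib

section
/- Upper semicontinuity of the CAL optimizer set at ε = 0: the set-valued map ε ↦ S^CAL(ε) is upper semicontinuous at 0, i.e., for every open set U ⊆ (ℝ^{S×A})^{N+1} with S^CAL(0) ⊆ U, there exists δ > 0 such that S^CAL(ε) ⊆ U for every ε ∈ [0, δ). -/
open scoped BigOperators

variable {S A : Type*}

/-- A stationary policy: nonnegative entries with unit row sums. -/
def IsPolicy [Fintype A] (π : S → A → ℝ) : Prop :=
  (∀ s a, 0 ≤ π s a) ∧ ∀ s, ∑ a, π s a = 1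

/-- A transition kernel: nonnegative entries with unit row sums. -/
def IsKernel [Fintype S] (P : S × A → S → ℝ) : Prop :=
  (∀ p s', 0 ≤ P p s') ∧ ∀ p, ∑ s', P p s' = 1

/-- An initial distribution. -/
def IsInitDist [Fintype S] (ν : S → ℝ) : Prop :=
  (∀ s, 0 ≤ ν s) ∧ ∑ s, ν s = 1

/-- Induced state transition matrix `P_π(s,s') = Σ_a π(s,a) P((s,a),s')`. -/
noncomputable def polMatrix [Fintype A] (P : S × A → S → ℝ) (π : S → A → ℝ) :
    Matrix S S ℝ :=
  Matrix.of fun s s' => ∑ a, π s a * P (s, a) s'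

/-- Discounted state distribution `ρ_π(s) = Σ_t γ^t ((P_πᵀ)^t ν)(s)`. -/
noncomputable def stateDist [Fintype S] [Fintype A] [DecidableEq S]
    (γ : ℝ) (ν : S → ℝ) (P : S × A → S → ℝ) (π : S → A → ℝ) (s : S) : ℝ :=
  ∑' t : ℕ, γ ^ t * (((polMatrix P π).transpose ^ t).mulVec ν s)

/-- Discounted occupation measure `μ_π(s,a) = π(s,a) ρ_π(s)`. -/
noncomputable def occ [Fintype S] [Fintype A] [DecidableEq S]
    (γ : ℝ) (ν : S → ℝ) (P : S × A → S → ℝ) (π : S → A → ℝ) (s : S) (a : A) : ℝ :=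
  π s a * stateDist γ ν P π s

/-- `‖Ψᵀ μ^i_π − Ψᵀ μ^i_{π^{E_i}}‖₁`: the worst-case cost discrepancy of policy `π`
with respect to the expert in environment `i`. -/
noncomputable def discrep {N nc : ℕ} [Fintype S] [Fintype A] [DecidableEq S]
    (γ : ℝ) (ν : S → ℝ) (P : Fin N → S × A → S → ℝ)
    (πE : Fin N → S → A → ℝ) (Ψ : S × A → Fin nc → ℝ)
    (i : Fin N) (π : S → A → ℝ) : ℝ :=
  ∑ j, |∑ p : S × A, Ψ p j *
    (occ γ ν (P i) π p.1 p.2 - occ γ ν (P i) (πE i) p.1 p.2)|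

/-- The CAL objective `Σ_i ‖Ψᵀ μ^i_{π_i} − Ψᵀ μ^i_{π^{E_i}}‖₁`. -/
noncomputable def calObj {N nc : ℕ} [Fintype S] [Fintype A] [DecidableEq S]
    (γ : ℝ) (ν : S → ℝ) (P : Fin N → S × A → S → ℝ)
    (πE : Fin N → S → A → ℝ) (Ψ : S × A → Fin nc → ℝ)
    (q : (Fin N → S → A → ℝ) × (S → A → ℝ)) : ℝ :=
  ∑ i, discrep γ ν P πE Ψ i (q.1 i)

/-- The CAL feasibility set `Φ(ε)`: tuples `(π_1,…,π_N,π_c)` of stationary policies with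
`max_{(s,a)} |π_i(s,a) − π_c(s,a)| ≤ ε` for all `i`. -/
def calFeas {N : ℕ} [Fintype A] (ε : ℝ) :
    Set ((Fin N → S → A → ℝ) × (S → A → ℝ)) :=
  {q | (∀ i, IsPolicy (q.1 i)) ∧ IsPolicy q.2 ∧
    ∀ i s a, |q.1 i s a - q.2 s a| ≤ ε}

/-- The CAL optimizer set `S^CAL(ε)`. -/
noncomputable def SCAL {N nc : ℕ} [Fintype S] [Fintype A] [DecidableEq S]
    (γ : ℝ) (ν : S → ℝ) (P : Fin N → S × A → S → ℝ)
    (πE : Fin N → S → A → ℝ) (Ψ : S × A → Fin nc → ℝ) (ε : ℝ) :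
    Set ((Fin N → S → A → ℝ) × (S → A → ℝ)) :=
  {q | q ∈ calFeas ε ∧ ∀ q' ∈ calFeas ε,
    calObj γ ν P πE Ψ q ≤ calObj γ ν P πE Ψ q'}

/-- The decoupled optimizer set `S^dec_i`. -/
noncomputable def Sdec {N nc : ℕ} [Fintype S] [Fintype A] [DecidableEq S]
    (γ : ℝ) (ν : S → ℝ) (P : Fin N → S × A → S → ℝ)
    (πE : Fin N → S → A → ℝ) (Ψ : S × A → Fin nc → ℝ) (i : Fin N) :
    Set (S → A → ℝ) :=
  {π | IsPolicy π ∧ ∀ π', IsPolicy π' →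
    discrep γ ν P πE Ψ i π ≤ discrep γ ν P πE Ψ i π'}

/-- The centralized optimizer set `S^cen`. -/
noncomputable def Scen {N nc : ℕ} [Fintype S] [Fintype A] [DecidableEq S]
    (γ : ℝ) (ν : S → ℝ) (P : Fin N → S × A → S → ℝ)
    (πE : Fin N → S → A → ℝ) (Ψ : S × A → Fin nc → ℝ) :
    Set (S → A → ℝ) :=
  {π | IsPolicy π ∧ ∀ π', IsPolicy π' →
    (∑ i, discrep γ ν P πE Ψ i π) ≤ ∑ i, discrep γ ν P πE Ψ i π'}


/-!
The feasible sets `Φ(ε)` have a closed graph in `(ε, q)`, all lie in the compact set of tuples of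
stationary policies, and grow with `ε`, while the objective is continuous on policies (the
discounted occupancy series is dominated by `Σ γ^t`). Take `q ∉ U` among the policy tuples. If
`q ∉ Φ(0)`, closedness of the graph keeps a neighbourhood of `q` out of `Φ(ε)` for small `ε`. If
`q ∈ Φ(0)`, it is not optimal there, so some `q' ∈ Φ(0) ⊆ Φ(ε)` is strictly better than every
point near `q`, which therefore cannot be optimal in `Φ(ε)` either. Compactness of the policy
tuples outside `U` makes the threshold on `ε` uniform.
-/

open Filter Topology Set Finset Matrix

section Minimizers

variable {T X : Type*} [TopologicalSpace T] [TopologicalSpace X]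

/-- A variant of Berge's maximum theorem for feasible sets that can only grow away from `t₀`. -/
theorem eventually_nhdsWithin_minimizers_subset {Φ : T → Set X} {f : X → ℝ} {s : Set T}
    {t₀ : T} {K U : Set X} (hK : IsCompact K) (hΦK : ∀ t ∈ s, Φ t ⊆ K) (hf : ContinuousOn f K)
    (hgraph : IsClosed {p : T × X | p.2 ∈ Φ p.1}) (hΦ₀ : ∀ t ∈ s, Φ t₀ ⊆ Φ t)
    (hU : IsOpen U) (hU₀ : {x | x ∈ Φ t₀ ∧ IsMinOn f (Φ t₀) x} ⊆ U) :
    ∀ᶠ t in 𝓝[s] t₀, {x | x ∈ Φ t ∧ IsMinOn f (Φ t) x} ⊆ U := by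
  suffices h : ∀ᶠ t in 𝓝 t₀, ∀ y ∈ K \ U, t ∈ s → ¬(y ∈ Φ t ∧ IsMinOn f (Φ t) y) by
    rw [eventually_nhdsWithin_iff]
    filter_upwards [h] with t ht hts x hx
    by_contra hxU
    exact ht x ⟨hΦK t hts hx.1, hxU⟩ hts hx
  refine (hK.diff hU).eventually_forall_of_forall_eventually fun y ⟨hyK, hyU⟩ => ?_
  by_cases hy : y ∈ Φ t₀
  · obtain ⟨y', hy', hlt⟩ : ∃ y' ∈ Φ t₀, f y' < f y := by
      by_contra! h
      exact hyU (hU₀ ⟨hy, h⟩)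
    have hnear : ∀ᶠ z in 𝓝 y, z ∈ K → f y' < f z :=
      eventually_nhdsWithin_iff.1 ((hf y hyK).eventually (lt_mem_nhds hlt))
    filter_upwards [continuousAt_snd.eventually hnear] with p hp hps ⟨hpΦ, hpmin⟩
    exact (hp (hΦK p.1 hps hpΦ)).not_ge (hpmin (hΦ₀ p.1 hps hy'))
  · filter_upwards [hgraph.isOpen_compl.mem_nhds hy] with p hp _ hpmin
    exact hp hpmin.1

end Minimizers

theorem Matrix.vecMul_mem_stdSimplex {R n : Type*} [Fintype n] [DecidableEq n] [Semiring R]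
    [PartialOrder R] [IsOrderedRing R] {M : Matrix n n R} (hM : M ∈ rowStochastic R n)
    {x : n → R} (hx : x ∈ stdSimplex R n) : x ᵥ* M ∈ stdSimplex R n := by
  refine ⟨nonneg_vecMul_of_mem_rowStochastic hM hx.1, ?_⟩
  simpa [dotProduct] using
    vecMul_dotProduct_one_eq_one_rowStochastic hM (by simpa [dotProduct] using hx.2)

section Occupancy

variable [Fintype A]

theorem setOf_isPolicy_eq_pi :
    {π : S → A → ℝ | IsPolicy π} = univ.pi fun _ => stdSimplex ℝ A := by
  ext π
  simp [IsPolicy, stdSimplex, forall_and]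

theorem isCompact_setOf_isPolicy : IsCompact {π : S → A → ℝ | IsPolicy π} := by
  rw [setOf_isPolicy_eq_pi]
  exact isCompact_univ_pi fun _ => isCompact_stdSimplex ℝ A

variable [Fintype S] [DecidableEq S]

theorem polMatrix_mem_rowStochastic {P : S × A → S → ℝ} {π : S → A → ℝ}
    (hP : IsKernel P) (hπ : IsPolicy π) : polMatrix P π ∈ rowStochastic ℝ S := by
  refine mem_rowStochastic_iff_sum.2
    ⟨fun s s' => sum_nonneg fun a _ => mul_nonneg (hπ.1 s a) (hP.1 _ _), fun s => ?_⟩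
  simp only [polMatrix, of_apply]
  rw [sum_comm]
  simp [← mul_sum, hP.2, hπ.2 s]

theorem continuousOn_stateDist {γ : ℝ} (hγ₀ : 0 ≤ γ) (hγ₁ : γ < 1)
    {ν : S → ℝ} (hν : IsInitDist ν) {P : S × A → S → ℝ} (hP : IsKernel P) (s : S) :
    ContinuousOn (fun π => stateDist γ ν P π s) {π | IsPolicy π} := by
  intro π _
  refine tendsto_tsum_of_dominated_convergence (summable_geometric_of_lt_one hγ₀ hγ₁)
    (fun t => Continuous.continuousWithinAt (by unfold polMatrix; fun_prop)) ?_
  filter_upwards [self_mem_nhdsWithin] with π' hπ' t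
  -- `((P_πᵀ)^t ν)(s)` is a coordinate of the distribution `ν P_π^t`, hence lies in `[0, 1]`
  have hdist := mem_Icc_of_mem_stdSimplex
    (vecMul_mem_stdSimplex (pow_mem (polMatrix_mem_rowStochastic hP hπ') t) hν) s
  rw [← transpose_pow, mulVec_transpose, norm_mul, norm_pow, Real.norm_of_nonneg hγ₀,
    Real.norm_of_nonneg hdist.1]
  exact mul_le_of_le_one_right (by positivity) hdist.2

theorem continuousOn_discrep {N nc : ℕ} {γ : ℝ} (hγ₀ : 0 ≤ γ) (hγ₁ : γ < 1)
    {ν : S → ℝ} (hν : IsInitDist ν) {P : Fin N → S × A → S → ℝ} (hP : ∀ i, IsKernel (P i))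
    (πE : Fin N → S → A → ℝ) (Ψ : S × A → Fin nc → ℝ) (i : Fin N) :
    ContinuousOn (discrep γ ν P πE Ψ i) {π | IsPolicy π} := by
  have hocc (p : S × A) : ContinuousOn (fun π => occ γ ν (P i) π p.1 p.2) {π | IsPolicy π} :=
    (continuous_apply_apply p.1 p.2).continuousOn.mul
      (continuousOn_stateDist hγ₀ hγ₁ hν (hP i) p.1)
  unfold discrep
  exact continuousOn_finsetSum _ fun j _ => (continuousOn_finsetSum _ fun p _ =>
    continuousOn_const.mul ((hocc p).sub continuousOn_const)).abs

end Occupancy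

section CAL

variable [Fintype A] {N : ℕ}

def policyTuples (N : ℕ) : Set ((Fin N → S → A → ℝ) × (S → A → ℝ)) :=
  (univ.pi fun _ => {π | IsPolicy π}) ×ˢ {π | IsPolicy π}

theorem isCompact_policyTuples : IsCompact (policyTuples (S := S) (A := A) N) :=
  (isCompact_univ_pi fun _ => isCompact_setOf_isPolicy).prod isCompact_setOf_isPolicy

theorem calFeas_subset_policyTuples (ε : ℝ) :
    calFeas (S := S) (A := A) (N := N) ε ⊆ policyTuples N :=
  fun _ hq => ⟨fun i _ => hq.1 i, hq.2.1⟩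

theorem calFeas_mono {ε ε' : ℝ} (h : ε ≤ ε') :
    calFeas (S := S) (A := A) (N := N) ε ⊆ calFeas ε' :=
  fun _ hq => ⟨hq.1, hq.2.1, fun i s a => (hq.2.2 i s a).trans h⟩

theorem isClosed_setOf_mem_calFeas :
    IsClosed {p : ℝ × (Fin N → S → A → ℝ) × (S → A → ℝ) | p.2 ∈ calFeas p.1} := by
  have hpol : IsClosed {p : ℝ × (Fin N → S → A → ℝ) × (S → A → ℝ) | p.2 ∈ policyTuples N} :=
    isCompact_policyTuples.isClosed.preimage continuous_snd
  have hgap : IsClosed {p : ℝ × (Fin N → S → A → ℝ) × (S → A → ℝ) |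
      ∀ i s a, |p.2.1 i s a - p.2.2 s a| ≤ p.1} := by
    simp only [ofPred_forall]
    exact isClosed_iInter fun i => isClosed_iInter fun s => isClosed_iInter fun a =>
      isClosed_le (by fun_prop) continuous_fst
  convert hpol.inter hgap using 1
  ext ⟨ε, q⟩
  simp [calFeas, policyTuples, and_assoc]

theorem continuousOn_calObj [Fintype S] [DecidableEq S] {nc : ℕ} {γ : ℝ} (hγ₀ : 0 ≤ γ)
    (hγ₁ : γ < 1) {ν : S → ℝ} (hν : IsInitDist ν) {P : Fin N → S × A → S → ℝ}
    (hP : ∀ i, IsKernel (P i)) (πE : Fin N → S → A → ℝ) (Ψ : S × A → Fin nc → ℝ) :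
    ContinuousOn (calObj γ ν P πE Ψ) (policyTuples N) :=
  continuousOn_finsetSum _ fun i _ => (continuousOn_discrep hγ₀ hγ₁ hν hP πE Ψ i).comp
    (by fun_prop) fun _ hq => hq.1 i (mem_univ i)

end CAL

theorem stmt8_general [Fintype S] [Fintype A] [DecidableEq S]
    {N nc : ℕ}
    (γ : ℝ) (hγ : γ ∈ Set.Ioo (0 : ℝ) 1)
    (ν : S → ℝ) (hν : IsInitDist ν)
    (P : Fin N → S × A → S → ℝ) (hP : ∀ i, IsKernel (P i))
    (πE : Fin N → S → A → ℝ)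
    (Ψ : S × A → Fin nc → ℝ)
    (U : Set ((Fin N → S → A → ℝ) × (S → A → ℝ))) (hU : IsOpen U)
    (hU0 : SCAL γ ν P πE Ψ 0 ⊆ U) :
    ∃ δ > 0, ∀ ε : ℝ, 0 ≤ ε → ε < δ → SCAL γ ν P πE Ψ ε ⊆ U := by
  have hev : ∀ᶠ ε in 𝓝[≥] 0, SCAL γ ν P πE Ψ ε ⊆ U :=
    eventually_nhdsWithin_minimizers_subset isCompact_policyTuples
      (fun ε _ => calFeas_subset_policyTuples ε)
      (continuousOn_calObj hγ.1.le hγ.2 hν hP πE Ψ) isClosed_setOf_mem_calFeas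
      (fun _ hε => calFeas_mono hε) hU hU0
  obtain ⟨δ, hδ, hsub⟩ := mem_nhdsGE_iff_exists_Ico_subset.1 hev
  exact ⟨δ, hδ, fun ε hε₀ hεδ => hsub ⟨hε₀, hεδ⟩⟩

/-- upper semicontinuity of the CAL optimizer set at `ε = 0`:
for every open set `U` containing `S^CAL(0)` there is `δ > 0` with
`S^CAL(ε) ⊆ U` for every `ε ∈ [0, δ)`. -/
theorem stmt8 [Fintype S] [Fintype A] [Nonempty S] [Nonempty A] [DecidableEq S]
    {N nc : ℕ}
    (γ : ℝ) (hγ : γ ∈ Set.Ioo (0 : ℝ) 1)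
    (ν : S → ℝ) (hν : IsInitDist ν)
    (P : Fin N → S × A → S → ℝ) (hP : ∀ i, IsKernel (P i))
    (πE : Fin N → S → A → ℝ) (hπE : ∀ i, IsPolicy (πE i))
    (Ψ : S × A → Fin nc → ℝ)
    (U : Set ((Fin N → S → A → ℝ) × (S → A → ℝ))) (hU : IsOpen U)
    (hU0 : SCAL γ ν P πE Ψ 0 ⊆ U) :
    ∃ δ > 0, ∀ ε : ℝ, 0 ≤ ε → ε < δ → SCAL γ ν P πE Ψ ε ⊆ U :=
  stmt8_general γ hγ ν hν P hP πE Ψ U hU hU0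
end

section
/- Generic performance, second part: fix j ∈ {1,…,N} and a decoupled optimizer π^dec_j ∈ S^dec_j. If there exists π^cen ∈ S^cen with V_{β̄}(π^cen) < V_{β̄}(π^dec_j), where β̄ := (1/N,…,1/N), then there exists ε̄ > 0 such that for every ε ∈ [0, ε̄) and every CAL optimizer (π*_1,…,π*_N,π*_c) ∈ S^CAL(ε), one has V_{β̄}(π*_j) ≤ V_{β̄}(π^dec_j). -/
/-!
The discrepancy `π ↦ ‖Ψᵀ μ^i_π − Ψᵀ μ^i_{π^{E_i}}‖₁` is Lipschitz in the sup-distance of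
policies: in the `ℓ∞`-operator norm `P_π` is a contraction, so `ρ_π` is a geometric series and
`‖P_π^t − P_{π'}^t‖ ≤ t ‖P_π − P_{π'}‖` bounds the change of its `t`-th term. A CAL optimizer at
level `ε` does no worse than the constant tuple `(π^cen, …, π^cen)`, and `π*_j` is `ε`-close to
`π*_c`, which is `ε`-close to every `π*_k`; hence `N V(π*_j) ≤ N V(π^cen) + 2 N L ε`, which stays
below `N V(π^dec_j)` once `ε` is small compared to the gap.
-/

open scoped BigOperators

variable {S A : Type*}

theorem norm_pow_sub_pow_le {R : Type*} [SeminormedRing R] [NormOneClass R] {a b : R}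
    (ha : ‖a‖ ≤ 1) (hb : ‖b‖ ≤ 1) (n : ℕ) : ‖a ^ n - b ^ n‖ ≤ n * ‖a - b‖ := by
  induction n with
  | zero => simp
  | succ n ih =>
    have hbn : ‖b ^ n‖ ≤ 1 := (norm_pow_le b n).trans (pow_le_one₀ (norm_nonneg b) hb)
    calc ‖a ^ (n + 1) - b ^ (n + 1)‖ = ‖a * (a ^ n - b ^ n) + (a - b) * b ^ n‖ := by
          rw [pow_succ', pow_succ']; noncomm_ring
      _ ≤ ‖a‖ * ‖a ^ n - b ^ n‖ + ‖a - b‖ * ‖b ^ n‖ :=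
          (norm_add_le _ _).trans (add_le_add (norm_mul_le _ _) (norm_mul_le _ _))
      _ ≤ 1 * (n * ‖a - b‖) + ‖a - b‖ * 1 := by gcongr
      _ = (n + 1 : ℕ) * ‖a - b‖ := by push_cast; ring

namespace Matrix

attribute [local instance] Matrix.linftyOpSeminormedAddCommGroup

variable {m n α : Type*} [Fintype m] [Fintype n] [SeminormedAddCommGroup α]

theorem linfty_opNorm_le_of_forall_sum_le {A : Matrix m n α} {c : ℝ} (hc : 0 ≤ c)
    (h : ∀ i, ∑ j, ‖A i j‖ ≤ c) : ‖A‖ ≤ c := by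
  lift c to NNReal using hc
  rw [linfty_opNorm_def, NNReal.coe_le_coe]
  refine Finset.sup_le fun i _ => ?_
  rw [← NNReal.coe_le_coe, NNReal.coe_sum]
  exact h i

theorem sum_norm_le_linfty_opNorm (A : Matrix m n α) (i : m) : ∑ j, ‖A i j‖ ≤ ‖A‖ := by
  rw [linfty_opNorm_def]
  have := Finset.le_sup (f := fun i => ∑ j, ‖A i j‖₊) (Finset.mem_univ i)
  rw [← NNReal.coe_le_coe, NNReal.coe_sum] at this
  exact this

theorem abs_vecMul_apply_le (v : m → ℝ) (B : Matrix m n ℝ) (j : n) :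
    |(v ᵥ* B) j| ≤ (∑ i, |v i|) * ‖B‖ := by
  calc |(v ᵥ* B) j| ≤ ∑ i, |v i| * |B i j| := by
        simpa only [vecMul, dotProduct, abs_mul] using
          Finset.abs_sum_le_sum_abs (fun i => v i * B i j) Finset.univ
    _ ≤ ∑ i, |v i| * ‖B‖ := by
        gcongr with i
        exact (Finset.single_le_sum (f := fun j => ‖B i j‖) (fun _ _ => norm_nonneg _)
          (Finset.mem_univ j)).trans (sum_norm_le_linfty_opNorm B i)
    _ = (∑ i, |v i|) * ‖B‖ := (Finset.sum_mul _ _ _).symm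

end Matrix

theorem IsInitDist.sum_abs_eq_one [Fintype S] {ν : S → ℝ} (hν : IsInitDist ν) :
    ∑ s, |ν s| = 1 := by
  rw [← hν.2]
  exact Finset.sum_congr rfl fun s _ => abs_of_nonneg (hν.1 s)

theorem IsPolicy.sum_abs_eq_one [Fintype A] {π : S → A → ℝ} (hπ : IsPolicy π) (s : S) :
    ∑ a, |π s a| = 1 := by
  rw [← hπ.2 s]
  exact Finset.sum_congr rfl fun a _ => abs_of_nonneg (hπ.1 s a)

theorem IsPolicy.le_one [Fintype A] {π : S → A → ℝ} (hπ : IsPolicy π) (s : S) (a : A) :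
    π s a ≤ 1 :=
  hπ.2 s ▸ Finset.single_le_sum (fun a _ => hπ.1 s a) (Finset.mem_univ a)

section Occupancy

attribute [local instance] Matrix.linftyOpNormedRing

open Matrix

variable [Fintype A]

theorem polMatrix_sub (P : S × A → S → ℝ) (π π' : S → A → ℝ) :
    polMatrix P π - polMatrix P π' = polMatrix P (π - π') := by
  ext s s'
  simp only [polMatrix, Matrix.sub_apply, Matrix.of_apply, Pi.sub_apply, sub_mul,
    Finset.sum_sub_distrib]

variable [Fintype S] [DecidableEq S]

theorem norm_polMatrix_le {P : S × A → S → ℝ} (hP : IsKernel P) {ρ : S → A → ℝ} {c : ℝ}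
    (hc : 0 ≤ c) (hρ : ∀ s, ∑ a, |ρ s a| ≤ c) : ‖polMatrix P ρ‖ ≤ c := by
  refine Matrix.linfty_opNorm_le_of_forall_sum_le hc fun s => ?_
  calc ∑ s', ‖polMatrix P ρ s s'‖ ≤ ∑ s', ∑ a, |ρ s a| * P (s, a) s' := by
        gcongr with s'
        simpa only [polMatrix, Matrix.of_apply, Real.norm_eq_abs, abs_mul,
          abs_of_nonneg (hP.1 _ _)] using
          Finset.abs_sum_le_sum_abs (fun a => ρ s a * P (s, a) s') Finset.univ
    _ = ∑ a, |ρ s a| := by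
        rw [Finset.sum_comm]
        simp only [← Finset.mul_sum, hP.2, mul_one]
    _ ≤ c := hρ s

variable {γ : ℝ} {ν : S → ℝ} {P : S × A → S → ℝ} {π π' : S → A → ℝ}

theorem norm_polMatrix_le_one (hP : IsKernel P) (hπ : IsPolicy π) : ‖polMatrix P π‖ ≤ 1 :=
  norm_polMatrix_le hP zero_le_one fun s => (hπ.sum_abs_eq_one s).le

theorem stateDist_eq_tsum (s : S) :
    stateDist γ ν P π s = ∑' t : ℕ, γ ^ t * (ν ᵥ* polMatrix P π ^ t) s := by
  simp only [stateDist, ← Matrix.transpose_pow, Matrix.mulVec_transpose]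

theorem discrep_le_add_of_abs_occ_sub_le {N nc : ℕ} {P : Fin N → S × A → S → ℝ}
    (πE : Fin N → S → A → ℝ) (Ψ : S × A → Fin nc → ℝ) {i : Fin N} {η : ℝ}
    (h : ∀ s a, |occ γ ν (P i) π s a - occ γ ν (P i) π' s a| ≤ η) :
    discrep γ ν P πE Ψ i π ≤ discrep γ ν P πE Ψ i π' + (∑ c, ∑ p, |Ψ p c|) * η := by
  simp only [discrep, Finset.sum_mul, ← Finset.sum_add_distrib]
  gcongr with c
  calc |∑ p, Ψ p c * (occ γ ν (P i) π p.1 p.2 - occ γ ν (P i) (πE i) p.1 p.2)|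
      = |∑ p, Ψ p c * (occ γ ν (P i) π' p.1 p.2 - occ γ ν (P i) (πE i) p.1 p.2)
          + ∑ p, Ψ p c * (occ γ ν (P i) π p.1 p.2 - occ γ ν (P i) π' p.1 p.2)| := by
        rw [← Finset.sum_add_distrib]
        exact congrArg abs (Finset.sum_congr rfl fun p _ => by ring)
    _ ≤ |∑ p, Ψ p c * (occ γ ν (P i) π' p.1 p.2 - occ γ ν (P i) (πE i) p.1 p.2)|
          + ∑ p, |Ψ p c| * η := by
        refine (abs_add_le _ _).trans ?_
        gcongr
        refine (Finset.abs_sum_le_sum_abs _ _).trans (Finset.sum_le_sum fun p _ => ?_)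
        rw [abs_mul]
        exact mul_le_mul_of_nonneg_left (h p.1 p.2) (abs_nonneg _)

variable [Nonempty S]

theorem abs_vecMul_polMatrix_pow_apply_le (hν : IsInitDist ν) (hP : IsKernel P)
    (hπ : IsPolicy π) (t : ℕ) (s : S) : |(ν ᵥ* polMatrix P π ^ t) s| ≤ 1 := by
  have hpow : ‖polMatrix P π ^ t‖ ≤ 1 :=
    (norm_pow_le _ t).trans (pow_le_one₀ (norm_nonneg _) (norm_polMatrix_le_one hP hπ))
  simpa only [hν.sum_abs_eq_one, one_mul] using (abs_vecMul_apply_le ν _ s).trans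
    (mul_le_mul_of_nonneg_left hpow (by positivity))

theorem norm_stateDist_term_le (hγ0 : 0 ≤ γ) (hν : IsInitDist ν) (hP : IsKernel P)
    (hπ : IsPolicy π) (s : S) (t : ℕ) : ‖γ ^ t * (ν ᵥ* polMatrix P π ^ t) s‖ ≤ γ ^ t := by
  rw [Real.norm_eq_abs, abs_mul, abs_of_nonneg (pow_nonneg hγ0 t)]
  exact mul_le_of_le_one_right (pow_nonneg hγ0 t)
    (abs_vecMul_polMatrix_pow_apply_le hν hP hπ t s)

theorem abs_stateDist_le (hγ0 : 0 ≤ γ) (hγ1 : γ < 1) (hν : IsInitDist ν) (hP : IsKernel P)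
    (hπ : IsPolicy π) (s : S) : |stateDist γ ν P π s| ≤ (1 - γ)⁻¹ := by
  rw [stateDist_eq_tsum]
  exact tsum_of_norm_bounded (hasSum_geometric_of_lt_one hγ0 hγ1)
    (norm_stateDist_term_le hγ0 hν hP hπ s)

theorem abs_stateDist_sub_le (hγ0 : 0 ≤ γ) (hγ1 : γ < 1) (hν : IsInitDist ν)
    (hP : IsKernel P) (hπ : IsPolicy π) (hπ' : IsPolicy π') (s : S) :
    |stateDist γ ν P π s - stateDist γ ν P π' s| ≤
      γ / (1 - γ) ^ 2 * ‖polMatrix P π - polMatrix P π'‖ := by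
  have hgeom := summable_geometric_of_lt_one hγ0 hγ1
  rw [stateDist_eq_tsum, stateDist_eq_tsum,
    ← (hgeom.of_norm_bounded (norm_stateDist_term_le hγ0 hν hP hπ s)).tsum_sub
      (hgeom.of_norm_bounded (norm_stateDist_term_le hγ0 hν hP hπ' s)), ← Real.norm_eq_abs]
  have hγ1' : ‖γ‖ < 1 := by rwa [Real.norm_of_nonneg hγ0]
  refine tsum_of_norm_bounded
    ((hasSum_coe_mul_geometric_of_norm_lt_one hγ1').mul_right
      ‖polMatrix P π - polMatrix P π'‖) fun t => ?_
  calc ‖γ ^ t * (ν ᵥ* polMatrix P π ^ t) s - γ ^ t * (ν ᵥ* polMatrix P π' ^ t) s‖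
      = γ ^ t * |(ν ᵥ* (polMatrix P π ^ t - polMatrix P π' ^ t)) s| := by
        rw [Matrix.vecMul_sub, Pi.sub_apply, ← mul_sub, Real.norm_eq_abs, abs_mul,
          abs_of_nonneg (pow_nonneg hγ0 t)]
    _ ≤ γ ^ t * (1 * (t * ‖polMatrix P π - polMatrix P π'‖)) := by
        gcongr
        rw [← hν.sum_abs_eq_one]
        exact (abs_vecMul_apply_le ν _ s).trans (by
          gcongr
          exact norm_pow_sub_pow_le (norm_polMatrix_le_one hP hπ)
            (norm_polMatrix_le_one hP hπ') t)
    _ = t * γ ^ t * ‖polMatrix P π - polMatrix P π'‖ := by ring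

theorem abs_occ_sub_le (hγ0 : 0 ≤ γ) (hγ1 : γ < 1) (hν : IsInitDist ν) (hP : IsKernel P)
    (hπ : IsPolicy π) (hπ' : IsPolicy π') {ε : ℝ} (hε : 0 ≤ ε)
    (hππ' : ∀ s a, |π s a - π' s a| ≤ ε) (s : S) (a : A) :
    |occ γ ν P π s a - occ γ ν P π' s a| ≤
      ((1 - γ)⁻¹ + γ / (1 - γ) ^ 2 * Fintype.card A) * ε := by
  have hnorm : ‖polMatrix P π - polMatrix P π'‖ ≤ Fintype.card A * ε := by
    rw [polMatrix_sub]
    refine norm_polMatrix_le hP (by positivity) fun s => ?_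
    simpa using Finset.sum_le_sum fun a (_ : a ∈ Finset.univ) => hππ' s a
  have hρ := abs_stateDist_le hγ0 hγ1 hν hP hπ' s
  have hρρ' := (abs_stateDist_sub_le hγ0 hγ1 hν hP hπ hπ' s).trans
    (mul_le_mul_of_nonneg_left hnorm (by have := sub_pos.2 hγ1; positivity))
  calc |occ γ ν P π s a - occ γ ν P π' s a|
      = |π s a * (stateDist γ ν P π s - stateDist γ ν P π' s)
          + (π s a - π' s a) * stateDist γ ν P π' s| := by
        simp only [occ]; ring_nf
    _ ≤ 1 * (γ / (1 - γ) ^ 2 * (Fintype.card A * ε)) + ε * (1 - γ)⁻¹ := by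
        refine (abs_add_le _ _).trans ?_
        rw [abs_mul, abs_mul, abs_of_nonneg (hπ.1 s a)]
        gcongr
        · exact hπ.le_one s a
        · exact hππ' s a
    _ = ((1 - γ)⁻¹ + γ / (1 - γ) ^ 2 * Fintype.card A) * ε := by ring

theorem exists_discrep_le_add_mul {N nc : ℕ} (hγ0 : 0 ≤ γ) (hγ1 : γ < 1) (hν : IsInitDist ν)
    {P : Fin N → S × A → S → ℝ} (hP : ∀ i, IsKernel (P i))
    (πE : Fin N → S → A → ℝ) (Ψ : S × A → Fin nc → ℝ) :
    ∃ L, 0 ≤ L ∧ ∀ (i : Fin N) (π π' : S → A → ℝ) (ε : ℝ), IsPolicy π → IsPolicy π' →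
      0 ≤ ε → (∀ s a, |π s a - π' s a| ≤ ε) →
        discrep γ ν P πE Ψ i π ≤ discrep γ ν P πE Ψ i π' + L * ε := by
  have := sub_pos.2 hγ1
  refine ⟨(∑ c, ∑ p, |Ψ p c|) * ((1 - γ)⁻¹ + γ / (1 - γ) ^ 2 * Fintype.card A),
    by positivity, fun i π π' ε hπ hπ' hε hππ' => ?_⟩
  rw [mul_assoc]
  exact discrep_le_add_of_abs_occ_sub_le πE Ψ
    (abs_occ_sub_le hγ0 hγ1 hν (hP i) hπ hπ' hε hππ')

end Occupancy

theorem sum_discrep_le_of_mem_SCAL [Fintype S] [Fintype A] [DecidableEq S] {N nc : ℕ}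
    {γ : ℝ} {ν : S → ℝ} {P : Fin N → S × A → S → ℝ} {πE : Fin N → S → A → ℝ}
    {Ψ : S × A → Fin nc → ℝ} {L ε : ℝ} (hε : 0 ≤ ε)
    (hL : ∀ (i : Fin N) (π π' : S → A → ℝ), IsPolicy π → IsPolicy π' →
      (∀ s a, |π s a - π' s a| ≤ ε) →
        discrep γ ν P πE Ψ i π ≤ discrep γ ν P πE Ψ i π' + L * ε)
    {q : (Fin N → S → A → ℝ) × (S → A → ℝ)} (hq : q ∈ SCAL γ ν P πE Ψ ε)
    {π₀ : S → A → ℝ} (hπ₀ : IsPolicy π₀) (j : Fin N) :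
    ∑ k, discrep γ ν P πE Ψ k (q.1 j) ≤ ∑ k, discrep γ ν P πE Ψ k π₀ + 2 * N * L * ε := by
  obtain ⟨⟨hqi, hqc, hclose⟩, hopt⟩ := hq
  have hconst : calObj γ ν P πE Ψ q ≤ ∑ k, discrep γ ν P πE Ψ k π₀ :=
    hopt (fun _ => π₀, π₀) ⟨fun _ => hπ₀, hπ₀, fun _ _ _ => by simpa using hε⟩
  calc ∑ k, discrep γ ν P πE Ψ k (q.1 j)
      ≤ ∑ k, (discrep γ ν P πE Ψ k (q.1 k) + L * ε + L * ε) := by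
        gcongr with k
        refine (hL k _ _ (hqi j) hqc (hclose j)).trans (add_le_add_left ?_ _)
        exact hL k _ _ hqc (hqi k) fun s a => abs_sub_comm (q.1 k s a) _ ▸ hclose k s a
    _ = calObj γ ν P πE Ψ q + 2 * N * L * ε := by
        simp only [calObj, Finset.sum_add_distrib, Finset.sum_const, Finset.card_univ,
          Fintype.card_fin, nsmul_eq_mul]
        ring
    _ ≤ ∑ k, discrep γ ν P πE Ψ k π₀ + 2 * N * L * ε := by gcongr

theorem stmt12_general [Fintype S] [Fintype A] [Nonempty S] [DecidableEq S]
    {N nc : ℕ}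
    (γ : ℝ) (hγ : γ ∈ Set.Ioo (0 : ℝ) 1)
    (ν : S → ℝ) (hν : IsInitDist ν)
    (P : Fin N → S × A → S → ℝ) (hP : ∀ i, IsKernel (P i))
    (πE : Fin N → S → A → ℝ)
    (Ψ : S × A → Fin nc → ℝ)
    (j : Fin N) (πdec : S → A → ℝ)
    (hlt : ∃ πcen ∈ Scen γ ν P πE Ψ,
      (1 / (N : ℝ)) * ∑ k, discrep γ ν P πE Ψ k πcen <
        (1 / (N : ℝ)) * ∑ k, discrep γ ν P πE Ψ k πdec) :
    ∃ εbar > 0, ∀ ε : ℝ, 0 ≤ ε → ε < εbar →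
      ∀ q ∈ SCAL γ ν P πE Ψ ε,
        (1 / (N : ℝ)) * ∑ k, discrep γ ν P πE Ψ k (q.1 j) ≤
          (1 / (N : ℝ)) * ∑ k, discrep γ ν P πE Ψ k πdec := by
  obtain ⟨πcen, hcen, hgap⟩ := hlt
  have hN : (0 : ℝ) < 1 / N := one_div_pos.2 (Nat.cast_pos.2 j.pos)
  have hgap' := lt_of_mul_lt_mul_left hgap hN.le
  obtain ⟨L, hL0, hL⟩ := exists_discrep_le_add_mul hγ.1.le hγ.2 hν hP πE Ψ
  set δ := ∑ k, discrep γ ν P πE Ψ k πdec - ∑ k, discrep γ ν P πE Ψ k πcen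
  have hδ : 0 < δ := sub_pos.2 hgap'
  refine ⟨δ / (2 * N * L + 1), by positivity, fun ε hε hεbar q hq => ?_⟩
  have hsmall : 2 * N * L * ε < δ := by
    rw [lt_div_iff₀ (by positivity)] at hεbar
    nlinarith [mul_nonneg hε hL0]
  have hbound := sum_discrep_le_of_mem_SCAL hε
    (fun i π π' hπ hπ' => hL i π π' ε hπ hπ' hε) hq hcen.1 j
  exact mul_le_mul_of_nonneg_left (by linarith) hN.le

/-- generic performance, second part: fix `j` and `π^dec_j ∈ S^dec_j`.
If some centralized optimizer `π^cen ∈ S^cen` satisfies `V_{β̄}(π^cen) < V_{β̄}(π^dec_j)`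
(with `β̄ = (1/N,…,1/N)`), then there is `ε̄ > 0` such that for every `ε ∈ [0, ε̄)` and
every CAL optimizer `(π*_1,…,π*_N,π*_c) ∈ S^CAL(ε)`, `V_{β̄}(π*_j) ≤ V_{β̄}(π^dec_j)`. -/
theorem stmt12 [Fintype S] [Fintype A] [Nonempty S] [Nonempty A] [DecidableEq S]
    {N nc : ℕ}
    (γ : ℝ) (hγ : γ ∈ Set.Ioo (0 : ℝ) 1)
    (ν : S → ℝ) (hν : IsInitDist ν)
    (P : Fin N → S × A → S → ℝ) (hP : ∀ i, IsKernel (P i))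
    (πE : Fin N → S → A → ℝ) (hπE : ∀ i, IsPolicy (πE i))
    (Ψ : S × A → Fin nc → ℝ)
    (j : Fin N) (πdec : S → A → ℝ) (hdec : πdec ∈ Sdec γ ν P πE Ψ j)
    (hlt : ∃ πcen ∈ Scen γ ν P πE Ψ,
      (1 / (N : ℝ)) * ∑ k, discrep γ ν P πE Ψ k πcen <
        (1 / (N : ℝ)) * ∑ k, discrep γ ν P πE Ψ k πdec) :
    ∃ εbar > 0, ∀ ε : ℝ, 0 ≤ ε → ε < εbar →
      ∀ q ∈ SCAL γ ν P πE Ψ ε,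
        (1 / (N : ℝ)) * ∑ k, discrep γ ν P πE Ψ k (q.1 j) ≤
          (1 / (N : ℝ)) * ∑ k, discrep γ ν P πE Ψ k πdec :=
  stmt12_general γ hγ ν hν P hP πE Ψ j πdec hlt
end
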